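/- arXiv:2011.03853 — 2 statements merged into one kernel-verified Lean document; each statement's English description precedes it below -/
import Mathlib

section
/- Under the GT-SAGA setup, for every k ≥ 0, almost surely E[‖g^k − ∇f(x^k)‖² | F^k] ≤ 2L²‖x^k − Jx^k‖² + 2nL²·t^k, where J := ((1/n)𝟙_n𝟙_nᵀ) ⊗ I_p. -/
open MeasureTheory ProbabilityTheory Finset Filter
open scoped ENNReal RealInnerProductSpace

noncomputable section

/-- The second largest singular value of a doubly stochastic matrix `w`, realized as the
operator norm of `w - (1/n) 𝟙ₙ 𝟙ₙᵀ` acting on `EuclideanSpace ℝ (Fin n)`. -/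
def secondSV {n : ℕ} (w : Matrix (Fin n) (Fin n) ℝ) : ℝ :=
  ‖LinearMap.toContinuousLinearMap
      (Matrix.toEuclideanLin (w - Matrix.of fun _ _ => (n : ℝ)⁻¹))‖

/-- The average `(1/n) ∑ᵢ vᵢ` of the blocks of a stacked vector `v ∈ ℝ^{np}`. -/
def blockAvg {n p : ℕ} (v : Fin n → EuclideanSpace ℝ (Fin p)) : EuclideanSpace ℝ (Fin p) :=
  (n : ℝ)⁻¹ • ∑ i, v i

/-- `‖v - J v‖²` for a stacked vector `v ∈ ℝ^{np}`, where `J = ((1/n) 𝟙ₙ 𝟙ₙᵀ) ⊗ Iₚ`. -/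
def consSq {n p : ℕ} (v : Fin n → EuclideanSpace ℝ (Fin p)) : ℝ :=
  ∑ i, ‖v i - blockAvg v‖ ^ 2

/-- `(W - J) v`, blockwise, where `W = w ⊗ Iₚ` and `J = ((1/n) 𝟙ₙ 𝟙ₙᵀ) ⊗ Iₚ`. -/
def WJapp {n p : ℕ} (w : Matrix (Fin n) (Fin n) ℝ) (v : Fin n → EuclideanSpace ℝ (Fin p)) :
    Fin n → EuclideanSpace ℝ (Fin p) :=
  fun i => (∑ r, w i r • v r) - blockAvg v

/-- The local batch function `fᵢ := (1/m) ∑ⱼ f_{i,j}`. -/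
def floc {n m p : ℕ} (f : Fin n → Fin m → EuclideanSpace ℝ (Fin p) → ℝ) (i : Fin n) :
    EuclideanSpace ℝ (Fin p) → ℝ :=
  fun u => (m : ℝ)⁻¹ * ∑ j, f i j u

/-- The global function `F := (1/n) ∑ᵢ fᵢ`. -/
def fglob {n m p : ℕ} (f : Fin n → Fin m → EuclideanSpace ℝ (Fin p) → ℝ) :
    EuclideanSpace ℝ (Fin p) → ℝ :=
  fun u => (n : ℝ)⁻¹ * ∑ i, floc f i u

/-- `F* := inf_x F(x)`. -/
def Fstar {n m p : ℕ} (f : Fin n → Fin m → EuclideanSpace ℝ (Fin p) → ℝ) : ℝ :=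
  ⨅ u, fglob f u

/-- `∇f̄(x) := (1/n) ∑ᵢ ∇fᵢ(xᵢ)`. -/
def gradfbar {n m p : ℕ} (f : Fin n → Fin m → EuclideanSpace ℝ (Fin p) → ℝ)
    (v : Fin n → EuclideanSpace ℝ (Fin p)) : EuclideanSpace ℝ (Fin p) :=
  (n : ℝ)⁻¹ • ∑ i, gradient (floc f i) (v i)

/-- The auxiliary quantity `t := (1/n) ∑ᵢ (1/m) ∑ⱼ ‖x̄ - z_{i,j}‖²`. -/
def tAux {n m p : ℕ} (xbar : EuclideanSpace ℝ (Fin p))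
    (z : Fin n → Fin m → EuclideanSpace ℝ (Fin p)) : ℝ :=
  (n : ℝ)⁻¹ * ∑ i, (m : ℝ)⁻¹ * ∑ j, ‖xbar - z i j‖ ^ 2

/-- The filtration `F^k := σ(τᵢᵗ, sᵢᵗ : i ∈ V, t ≤ k-1)`, with `F⁰` trivial. -/
def gtFilt {Ω : Type*} {n m : ℕ} (τ s : Fin n → ℕ → Ω → Fin m) (k : ℕ) :
    MeasurableSpace Ω :=
  ⨆ (i : Fin n) (t : ℕ) (_ : t < k),
    MeasurableSpace.comap (τ i t) ⊤ ⊔ MeasurableSpace.comap (s i t) ⊤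

/-!
Conditionally on `F^k` the iterates `x^k` and the SAGA tables `z^k` are known, while the sample
`τ_i^k` is independent of `F^k` and uniform on `{1, …, m}`. Hence the conditional expectation of
`‖g_i^k - ∇f_i(x_i^k)‖²` is the empirical variance `(1/m) ∑_j ‖d_j - d̄‖²` of
`d_j = ∇f_{i,j}(x_i^k) - ∇f_{i,j}(z_{i,j}^k)`. A variance is at most the second moment, and
`‖d_j‖ ≤ L ‖x_i^k - z_{i,j}^k‖` together with
`‖x_i - z_{i,j}‖² ≤ 2 ‖x_i - x̄‖² + 2 ‖x̄ - z_{i,j}‖²` gives the bound.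
-/

theorem sum_norm_sub_average_sq_le {ι E : Type*} [NormedAddCommGroup E] [InnerProductSpace ℝ E]
    (s : Finset ι) (v : ι → E) :
    ∑ j ∈ s, ‖v j - (#s : ℝ)⁻¹ • ∑ i ∈ s, v i‖ ^ 2 ≤ ∑ j ∈ s, ‖v j‖ ^ 2 := by
  rcases s.eq_empty_or_nonempty with rfl | hs
  · simp
  set c := (#s : ℝ)⁻¹ • ∑ i ∈ s, v i
  have hsum : ∑ i ∈ s, v i = (#s : ℝ) • c := by
    rw [smul_inv_smul₀ (Nat.cast_ne_zero.2 hs.card_pos.ne')]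
  calc ∑ j ∈ s, ‖v j - c‖ ^ 2
      = ∑ j ∈ s, ‖v j‖ ^ 2 - 2 * ⟪∑ j ∈ s, v j, c⟫ + #s * ‖c‖ ^ 2 := by
        simp only [norm_sub_sq_real, sum_add_distrib, sum_sub_distrib, ← mul_sum, sum_inner,
          sum_const, nsmul_eq_mul]
    _ = ∑ j ∈ s, ‖v j‖ ^ 2 - #s * ‖c‖ ^ 2 := by
        rw [hsum, real_inner_smul_left, real_inner_self_eq_norm_sq]; ring
    _ ≤ ∑ j ∈ s, ‖v j‖ ^ 2 := sub_le_self _ (by positivity)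

theorem gradient_const_mul_sum {ι E : Type*} [NormedAddCommGroup E] [InnerProductSpace ℝ E]
    [CompleteSpace E] (s : Finset ι) {f : ι → E → ℝ} {u : E}
    (hf : ∀ j ∈ s, DifferentiableAt ℝ (f j) u) (c : ℝ) :
    gradient (fun v => c * ∑ j ∈ s, f j v) u = c • ∑ j ∈ s, gradient (f j) u := by
  simp only [gradient, fderiv_const_mul (DifferentiableAt.fun_sum hf), fderiv_fun_sum hf,
    map_smul, map_sum]

theorem measurable_of_countable_family {α ι β : Type*} {mα : MeasurableSpace α}
    [MeasurableSpace ι] [Countable ι] [MeasurableSingletonClass ι] [MeasurableSpace β]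
    {G : ι → α → β} (hG : ∀ j, Measurable (G j)) {τ : α → ι} (hτ : Measurable τ) :
    Measurable fun a => G (τ a) a :=
  (measurable_from_prod_countable_left (f := fun q : α × ι => G q.2 q.1) hG).comp
    (measurable_id.prodMk hτ)

section CondExp

variable {Ω ι : Type*} [Fintype ι] {τ : Ω → ι} {ψ : ι → Ω → ℝ}

theorem fun_apply_eq_sum_indicator :
    (fun ω => ψ (τ ω) ω) = ∑ j, (τ ⁻¹' {j}).indicator (ψ j) := by
  classical
  ext ω
  simp [Finset.sum_apply, Set.indicator_apply, eq_comm]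

variable {m₀ mΩ : MeasurableSpace Ω} {P : Measure[mΩ] Ω} [MeasurableSpace ι]
  [MeasurableSingletonClass ι]

theorem integrable_apply_of_fintype (hτ : Measurable τ) (hψ : ∀ j, Integrable (ψ j) P) :
    Integrable (fun ω => ψ (τ ω) ω) P := by
  rw [fun_apply_eq_sum_indicator]
  exact integrable_finsetSum' _ fun j _ => (hψ j).indicator (hτ (measurableSet_singleton j))

theorem condExp_apply_of_indep [IsFiniteMeasure P] (hm₀ : m₀ ≤ mΩ) (hτ : Measurable τ)
    (hindep : Indep (MeasurableSpace.comap τ inferInstance) m₀ P)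
    (hψ : ∀ j, StronglyMeasurable[m₀] (ψ j)) (hψint : ∀ j, Integrable (ψ j) P) :
    P[fun ω => ψ (τ ω) ω | m₀] =ᵐ[P] fun ω => ∑ j, P.real (τ ⁻¹' {j}) * ψ j ω := by
  classical
  rw [fun_apply_eq_sum_indicator]
  have hA : ∀ j, MeasurableSet (τ ⁻¹' {j}) := fun j => hτ (measurableSet_singleton j)
  have hindicator : ∀ j, P[(τ ⁻¹' {j}).indicator (fun _ => (1 : ℝ)) | m₀]
      =ᵐ[P] fun _ => P.real (τ ⁻¹' {j}) := by
    intro j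
    refine (condExp_indep_eq hτ.comap_le hm₀ ?_ hindep).trans ?_
    · exact stronglyMeasurable_const.indicator ⟨{j}, measurableSet_singleton j, rfl⟩
    · simp [integral_indicator_const _ (hA j)]
  have hterm : ∀ j, P[(τ ⁻¹' {j}).indicator (ψ j) | m₀]
      =ᵐ[P] fun ω => P.real (τ ⁻¹' {j}) * ψ j ω := by
    intro j
    have hprod : (τ ⁻¹' {j}).indicator (ψ j) = (τ ⁻¹' {j}).indicator (fun _ => 1) * ψ j := by
      ext ω
      simp [Set.indicator_apply]
    rw [hprod]
    filter_upwards [condExp_mul_of_stronglyMeasurable_right (hψ j)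
      (hprod ▸ (hψint j).indicator (hA j)) ((integrable_const 1).indicator (hA j)),
      hindicator j] with ω h1 h2
    simp [h1, h2]
  filter_upwards [condExp_finsetSum (s := univ) (fun j _ => (hψint j).indicator (hA j)) m₀,
    ae_all_iff.2 hterm] with ω h1 h2
  simp [h1, h2]

end CondExp

section SagaError

variable {E : Type*} [NormedAddCommGroup E] [InnerProductSpace ℝ E] [CompleteSpace E] {m : ℕ}

def sagaError (f : Fin m → E → ℝ) (u : E) (z : Fin m → E) (j : Fin m) : E :=
  (gradient (f j) u - gradient (f j) (z j))
    - (m : ℝ)⁻¹ • ∑ l, (gradient (f l) u - gradient (f l) (z l))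

theorem sagaError_eq {f : Fin m → E → ℝ} {u : E} (hf : ∀ j, DifferentiableAt ℝ (f j) u)
    (z : Fin m → E) (j : Fin m) :
    sagaError f u z j = gradient (f j) u - gradient (f j) (z j)
      + (m : ℝ)⁻¹ • ∑ l, gradient (f l) (z l) - gradient (fun v => (m : ℝ)⁻¹ * ∑ l, f l v) u := by
  rw [gradient_const_mul_sum _ fun l _ => hf l, sagaError, sum_sub_distrib, smul_sub]
  abel

theorem average_norm_sq_sagaError_le (hm : m ≠ 0) {f : Fin m → E → ℝ} {K : NNReal}
    (hf : ∀ j, LipschitzWith K (gradient (f j))) (u c : E) (z : Fin m → E) :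
    (m : ℝ)⁻¹ * ∑ j, ‖sagaError f u z j‖ ^ 2
      ≤ 2 * K ^ 2 * ‖u - c‖ ^ 2 + 2 * K ^ 2 * ((m : ℝ)⁻¹ * ∑ j, ‖c - z j‖ ^ 2) := by
  have hdiff : ∀ j, ‖gradient (f j) u - gradient (f j) (z j)‖ ^ 2
      ≤ 2 * K ^ 2 * ‖u - c‖ ^ 2 + 2 * K ^ 2 * ‖c - z j‖ ^ 2 := fun j =>
    calc ‖gradient (f j) u - gradient (f j) (z j)‖ ^ 2
        ≤ (K * (‖u - c‖ + ‖c - z j‖)) ^ 2 := by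
          gcongr
          exact (hf j).norm_sub_le u (z j) |>.trans <|
            by gcongr; exact norm_sub_le_norm_sub_add_norm_sub u c (z j)
      _ ≤ 2 * K ^ 2 * ‖u - c‖ ^ 2 + 2 * K ^ 2 * ‖c - z j‖ ^ 2 := by
          nlinarith [add_sq_le (a := ‖u - c‖) (b := ‖c - z j‖), sq_nonneg (K : ℝ)]
  have hvar := sum_norm_sub_average_sq_le univ fun j => gradient (f j) u - gradient (f j) (z j)
  simp only [card_univ, Fintype.card_fin] at hvar
  calc (m : ℝ)⁻¹ * ∑ j, ‖sagaError f u z j‖ ^ 2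
      ≤ (m : ℝ)⁻¹ * ∑ j, (2 * K ^ 2 * ‖u - c‖ ^ 2 + 2 * K ^ 2 * ‖c - z j‖ ^ 2) := by
        gcongr (m : ℝ)⁻¹ * ?_
        exact hvar.trans (sum_le_sum fun j _ => hdiff j)
    _ = 2 * K ^ 2 * ‖u - c‖ ^ 2 + 2 * K ^ 2 * ((m : ℝ)⁻¹ * ∑ j, ‖c - z j‖ ^ 2) := by
        rw [sum_add_distrib, sum_const, card_univ, Fintype.card_fin, nsmul_eq_mul, ← mul_sum]
        field_simp

variable {Ω : Type*} {mΩ : MeasurableSpace Ω}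

theorem memLp_sagaError {P : Measure Ω} {p : ℝ≥0∞} {f : Fin m → E → ℝ} {K : NNReal}
    (hf : ∀ j, LipschitzWith K (gradient (f j))) {u : Ω → E} {z : Fin m → Ω → E}
    (hu : MemLp u p P) (hz : ∀ l, MemLp (z l) p P) (j : Fin m) :
    MemLp (fun ω => sagaError f (u ω) (fun l => z l ω) j) p P := by
  have hdiff : ∀ l, MemLp (fun ω => gradient (f l) (u ω) - gradient (f l) (z l ω)) p P :=
    fun l => ((hu.sub (hz l)).of_le_mul' (c := K)
      (((hf l).continuous.comp_aestronglyMeasurable hu.1).sub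
        ((hf l).continuous.comp_aestronglyMeasurable (hz l).1))
      (.of_forall fun ω => by
        simpa [enorm_eq_nnnorm, ← ENNReal.coe_mul, ← NNReal.coe_le_coe]
          using (hf l).norm_sub_le (u ω) (z l ω)))
  exact (hdiff j).sub ((memLp_finsetSum' univ fun l _ => hdiff l).const_smul (m : ℝ)⁻¹) |>.ae_eq
    (.of_forall fun ω => by simp [sagaError, Finset.sum_apply])

theorem measurable_sagaError [MeasurableSpace E] [BorelSpace E] [SecondCountableTopology E]
    {f : Fin m → E → ℝ} (hf : ∀ j, Continuous (gradient (f j))) {u : Ω → E}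
    {z : Fin m → Ω → E} (hu : Measurable u) (hz : ∀ l, Measurable (z l)) (j : Fin m) :
    Measurable fun ω => sagaError f (u ω) (fun l => z l ω) j := by
  have hdiff : ∀ l, Measurable fun ω => gradient (f l) (u ω) - gradient (f l) (z l ω) :=
    fun l => ((hf l).measurable.comp hu).sub ((hf l).measurable.comp (hz l))
  exact (hdiff j).sub ((Finset.measurable_sum _ fun l _ => hdiff l).const_smul _)

end SagaError

theorem condExp_sum_norm_sq_sagaError {Ω ι E : Type*} [NormedAddCommGroup E]
    [InnerProductSpace ℝ E] [CompleteSpace E] [MeasurableSpace E] [BorelSpace E]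
    [SecondCountableTopology E] {m₀ mΩ : MeasurableSpace Ω} {P : Measure[mΩ] Ω}
    [IsFiniteMeasure P] [Fintype ι] {m : ℕ} (hm₀ : m₀ ≤ mΩ) {f : ι → Fin m → E → ℝ}
    {K : NNReal} (hf : ∀ i j, LipschitzWith K (gradient (f i j))) {τ : ι → Ω → Fin m}
    (hτ : ∀ i, Measurable (τ i))
    (hindep : ∀ i, Indep (MeasurableSpace.comap (τ i) inferInstance) m₀ P)
    (hunif : ∀ i j, P (τ i ⁻¹' {j}) = (m : ℝ≥0∞)⁻¹) {u : ι → Ω → E} {z : ι → Fin m → Ω → E}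
    (hu : ∀ i, Measurable[m₀] (u i)) (hz : ∀ i j, Measurable[m₀] (z i j))
    (huL2 : ∀ i, MemLp (u i) 2 P) (hzL2 : ∀ i j, MemLp (z i j) 2 P) :
    P[fun ω => ∑ i, ‖sagaError (f i) (u i ω) (fun l => z i l ω) (τ i ω)‖ ^ 2 | m₀]
      =ᵐ[P] fun ω => ∑ i, (m : ℝ)⁻¹ * ∑ j, ‖sagaError (f i) (u i ω) (fun l => z i l ω) j‖ ^ 2 := by
  set ψ : ι → Fin m → Ω → ℝ := fun i j ω => ‖sagaError (f i) (u i ω) (fun l => z i l ω) j‖ ^ 2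
  have hψ : ∀ i j, Measurable[m₀] (ψ i j) := fun i j =>
    (measurable_norm.pow_const 2).comp
      (measurable_sagaError (fun j => (hf i j).continuous) (hu i) (hz i) j)
  have hψint : ∀ i j, Integrable (ψ i j) P := fun i j =>
    have hL2 := memLp_sagaError (hf i) (huL2 i) (hzL2 i) j
    (memLp_two_iff_integrable_sq_norm hL2.1).1 hL2
  have hunif' : ∀ i j, P.real (τ i ⁻¹' {j}) = (m : ℝ)⁻¹ := fun i j => by
    simp [measureReal_def, hunif]
  have hterm : ∀ i, P[fun ω => ψ i (τ i ω) ω | m₀] =ᵐ[P] fun ω => (m : ℝ)⁻¹ * ∑ j, ψ i j ω :=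
    fun i => by
      filter_upwards [condExp_apply_of_indep hm₀ (hτ i) (hindep i)
        (fun j => (hψ i j).stronglyMeasurable) (hψint i)] with ω hω
      simp only [hω, hunif', mul_sum]
  rw [← Finset.sum_fn]
  filter_upwards [condExp_finsetSum (s := univ)
      (fun i _ => integrable_apply_of_fintype (hτ i) (hψint i)) m₀,
    ae_all_iff.2 hterm] with ω h1 h2
  rw [h1, Finset.sum_apply]
  exact sum_congr rfl fun i _ => h2 i

theorem sum_average_norm_sq_sagaError_le {n m p : ℕ} (hn : n ≠ 0) (hm : m ≠ 0)
    {f : Fin n → Fin m → EuclideanSpace ℝ (Fin p) → ℝ} {K : NNReal}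
    (hf : ∀ i j, LipschitzWith K (gradient (f i j))) (x : Fin n → EuclideanSpace ℝ (Fin p))
    (z : Fin n → Fin m → EuclideanSpace ℝ (Fin p)) :
    ∑ i, (m : ℝ)⁻¹ * ∑ j, ‖sagaError (f i) (x i) (z i) j‖ ^ 2
      ≤ 2 * K ^ 2 * consSq x + 2 * n * K ^ 2 * tAux (blockAvg x) z := by
  calc ∑ i, (m : ℝ)⁻¹ * ∑ j, ‖sagaError (f i) (x i) (z i) j‖ ^ 2
      ≤ ∑ i, (2 * K ^ 2 * ‖x i - blockAvg x‖ ^ 2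
          + 2 * K ^ 2 * ((m : ℝ)⁻¹ * ∑ j, ‖blockAvg x - z i j‖ ^ 2)) :=
        sum_le_sum fun i _ => average_norm_sq_sagaError_le hm (hf i) _ _ _
    _ = 2 * K ^ 2 * consSq x + 2 * n * K ^ 2 * tAux (blockAvg x) z := by
        rw [consSq, tAux, sum_add_distrib, ← mul_sum, ← mul_sum]
        field_simp

section Filtration

variable {Ω : Type*} {n m : ℕ} {τ s : Fin n → ℕ → Ω → Fin m}

theorem gtFilt_mono : Monotone (gtFilt τ s) := fun _ _ hab =>
  iSup_le fun i => iSup_le fun t => iSup_le fun h =>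
    le_iSup_of_le i <| le_iSup_of_le t <| le_iSup_of_le (h.trans_le hab) le_rfl

theorem measurable_gtFilt_tau (i : Fin n) {t k : ℕ} (h : t < k) :
    Measurable[gtFilt τ s k] (τ i t) :=
  .of_comap_le <| le_iSup_of_le i <| le_iSup_of_le t <| le_iSup_of_le h le_sup_left

theorem measurable_gtFilt_s (i : Fin n) {t k : ℕ} (h : t < k) :
    Measurable[gtFilt τ s k] (s i t) :=
  .of_comap_le <| le_iSup_of_le i <| le_iSup_of_le t <| le_iSup_of_le h le_sup_right

variable [mΩ : MeasurableSpace Ω]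

theorem gtFilt_le (hτ : ∀ i k, Measurable (τ i k)) (hs : ∀ i k, Measurable (s i k)) (k : ℕ) :
    gtFilt τ s k ≤ mΩ :=
  iSup_le fun i => iSup_le fun t => iSup_le fun _ => sup_le (hτ i t).comap_le (hs i t).comap_le

theorem indep_comap_gtFilt {P : Measure Ω} (hτ : ∀ i k, Measurable (τ i k))
    (hs : ∀ i k, Measurable (s i k))
    (hindep : iIndepFun
      (fun (q : Fin n × ℕ × Bool) ω => if q.2.2 then τ q.1 q.2.1 ω else s q.1 q.2.1 ω) P)
    (i : Fin n) (k : ℕ) :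
    Indep (MeasurableSpace.comap (τ i k) inferInstance) (gtFilt τ s k) P := by
  set X : Fin n × ℕ × Bool → Ω → Fin m := fun q ω => if q.2.2 then τ q.1 q.2.1 ω else s q.1 q.2.1 ω
  have hX : ∀ q, MeasurableSpace.comap (X q) inferInstance ≤ mΩ := by
    rintro ⟨i', t, _ | _⟩
    exacts [(hs i' t).comap_le, (hτ i' t).comap_le]
  have hpast : gtFilt τ s k ≤ ⨆ q ∈ {q : Fin n × ℕ × Bool | q.2.1 < k},
      MeasurableSpace.comap (X q) inferInstance :=
    iSup_le fun i' => iSup_le fun t => iSup_le fun ht =>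
      sup_le (le_iSup₂_of_le (i', t, true) ht le_rfl) (le_iSup₂_of_le (i', t, false) ht le_rfl)
  have h := indep_iSup_of_disjoint hX hindep.iIndep (S := {(i, k, true)})
    (T := {q | q.2.1 < k}) (by simp)
  rw [_root_.iSup_singleton] at h
  exact indep_of_indep_of_le_right h hpast

end Filtration

section Adapted

variable {Ω : Type*} {n m : ℕ} {τ s : Fin n → ℕ → Ω → Fin m}
  {E : Type*} [NormedAddCommGroup E] [InnerProductSpace ℝ E] [CompleteSpace E]
  [MeasurableSpace E] [BorelSpace E] [SecondCountableTopology E]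

theorem measurable_gtFilt_sagaEstimator {f : Fin n → Fin m → E → ℝ}
    (hgrad : ∀ i j, Continuous (gradient (f i j)))
    {x g : ℕ → Fin n → Ω → E} {z : ℕ → Fin n → Fin m → Ω → E}
    (hgdef : ∀ k i ω, g k i ω =
      gradient (f i (τ i k ω)) (x k i ω) - gradient (f i (τ i k ω)) (z k i (τ i k ω) ω)
        + (m : ℝ)⁻¹ • ∑ j, gradient (f i j) (z k i j ω))
    {k : ℕ} (hx : ∀ i, Measurable[gtFilt τ s k] (x k i))
    (hz : ∀ i j, Measurable[gtFilt τ s k] (z k i j)) (i : Fin n) :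
    Measurable[gtFilt τ s (k + 1)] (g k i) := by
  have hle := gtFilt_mono (τ := τ) (s := s) k.le_succ
  rw [funext (hgdef k i)]
  refine measurable_of_countable_family (G := fun j ω => gradient (f i j) (x k i ω)
    - gradient (f i j) (z k i j ω) + (m : ℝ)⁻¹ • ∑ l, gradient (f i l) (z k i l ω))
    (fun j => ?_) (measurable_gtFilt_tau i k.lt_succ_self)
  refine (((hgrad i j).measurable.comp ((hx i).mono hle le_rfl)).sub
    ((hgrad i j).measurable.comp ((hz i j).mono hle le_rfl))).add ?_
  exact (Finset.measurable_sum _ fun l _ =>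
    (hgrad i l).measurable.comp ((hz i l).mono hle le_rfl)).const_smul _

theorem gtsaga_adapted {f : Fin n → Fin m → E → ℝ}
    (hgrad : ∀ i j, Continuous (gradient (f i j)))
    {w : Matrix (Fin n) (Fin n) ℝ} {α : ℝ} {x y g : ℕ → Fin n → Ω → E}
    {z : ℕ → Fin n → Fin m → Ω → E} {x0 : E}
    (hx0 : ∀ i ω, x 0 i ω = x0)
    (hz0 : ∀ i j ω, z 0 i j ω = x0)
    (hy0 : ∀ i ω, y 0 i ω = 0)
    (hgdef : ∀ k i ω, g k i ω =
      gradient (f i (τ i k ω)) (x k i ω) - gradient (f i (τ i k ω)) (z k i (τ i k ω) ω)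
        + (m : ℝ)⁻¹ • ∑ j, gradient (f i j) (z k i j ω))
    (hydef : ∀ k i ω, y (k + 1) i ω =
      ∑ r, w i r • (y k r ω + g k r ω - (if k = 0 then 0 else g (k - 1) r ω)))
    (hxdef : ∀ k i ω, x (k + 1) i ω = ∑ r, w i r • (x k r ω - α • y (k + 1) r ω))
    (hzdef : ∀ k i j ω, z (k + 1) i j ω = if j = s i k ω then x k i ω else z k i j ω)
    (k : ℕ) :
    (∀ i, Measurable[gtFilt τ s k] (x k i)) ∧ (∀ i j, Measurable[gtFilt τ s k] (z k i j)) := by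
  -- `y (k + 1)` involves `g (k - 1)`, so the induction also carries that term.
  suffices H : ∀ k, (∀ i, Measurable[gtFilt τ s k] (x k i)) ∧
      (∀ i, Measurable[gtFilt τ s k] (y k i)) ∧ (∀ i j, Measurable[gtFilt τ s k] (z k i j)) ∧
      ∀ i, Measurable[gtFilt τ s k] fun ω => if k = 0 then 0 else g (k - 1) i ω by
    exact ⟨(H k).1, (H k).2.2.1⟩
  intro k
  induction k with
  | zero =>
    refine ⟨fun i => ?_, fun i => ?_, fun i j => ?_, fun i => ?_⟩
    · simp only [funext (hx0 i), measurable_const]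
    · simp only [funext (hy0 i), measurable_const]
    · simp only [funext (hz0 i j), measurable_const]
    · simp only [if_pos, measurable_const]
  | succ k ih =>
    obtain ⟨hx, hy, hz, hprev⟩ := ih
    have hle := gtFilt_mono (τ := τ) (s := s) k.le_succ
    have hg := measurable_gtFilt_sagaEstimator hgrad hgdef hx hz
    have hy' : ∀ i, Measurable[gtFilt τ s (k + 1)] (y (k + 1) i) := fun i => by
      rw [funext (hydef k i)]
      exact Finset.measurable_sum _ fun r _ =>
        ((((hy r).mono hle le_rfl).add (hg r)).sub ((hprev r).mono hle le_rfl)).const_smul _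
    refine ⟨fun i => ?_, hy', fun i j => ?_, fun i => by simpa using hg i⟩
    · rw [funext (hxdef k i)]
      exact Finset.measurable_sum _ fun r _ =>
        (((hx r).mono hle le_rfl).sub ((hy' r).const_smul α)).const_smul _
    · rw [funext (hzdef k i j)]
      refine Measurable.ite ?_ ((hx i).mono hle le_rfl) ((hz i j).mono hle le_rfl)
      exact measurableSet_eq_fun measurable_const (measurable_gtFilt_s i k.lt_succ_self)

end Adapted

theorem gtsaga_local_variance_bound_general
    {Ω : Type} [MeasurableSpace Ω] (P : Measure Ω) [IsProbabilityMeasure P]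
    {n m p : ℕ} (hn : 1 ≤ n) (hm : 1 ≤ m)
    (L : ℝ) (hL : 0 < L)
    (f : Fin n → Fin m → EuclideanSpace ℝ (Fin p) → ℝ)
    (hdiff : ∀ i j, Differentiable ℝ (f i j))
    (hlip : ∀ i j, LipschitzWith L.toNNReal (gradient (f i j)))
    (w : Matrix (Fin n) (Fin n) ℝ)
    (τ s : Fin n → ℕ → Ω → Fin m)
    (hτmeas : ∀ i k, Measurable (τ i k)) (hsmeas : ∀ i k, Measurable (s i k))
    (hτunif : ∀ i k j, P {ω | τ i k ω = j} = (m : ℝ≥0∞)⁻¹)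
    (hindep : iIndepFun (m := fun _ : Fin n × ℕ × Bool => (inferInstance : MeasurableSpace (Fin m)))
      (fun q ω => if q.2.2 then τ q.1 q.2.1 ω else s q.1 q.2.1 ω) P)
    (α : ℝ)
    (x y g : ℕ → Fin n → Ω → EuclideanSpace ℝ (Fin p))
    (z : ℕ → Fin n → Fin m → Ω → EuclideanSpace ℝ (Fin p))
    (x0 : EuclideanSpace ℝ (Fin p))
    (hx0 : ∀ i ω, x 0 i ω = x0)
    (hz0 : ∀ i j ω, z 0 i j ω = x0)
    (hy0 : ∀ i ω, y 0 i ω = 0)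
    (hgdef : ∀ k i ω, g k i ω =
      gradient (f i (τ i k ω)) (x k i ω) - gradient (f i (τ i k ω)) (z k i (τ i k ω) ω)
        + (m : ℝ)⁻¹ • ∑ j, gradient (f i j) (z k i j ω))
    (hydef : ∀ k i ω, y (k + 1) i ω =
      ∑ r, w i r • (y k r ω + g k r ω - (if k = 0 then 0 else g (k - 1) r ω)))
    (hxdef : ∀ k i ω, x (k + 1) i ω = ∑ r, w i r • (x k r ω - α • y (k + 1) r ω))
    (hzdef : ∀ k i j ω, z (k + 1) i j ω = if j = s i k ω then x k i ω else z k i j ω)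
    (hxL2 : ∀ k i, MemLp (x k i) 2 P)
    (hzL2 : ∀ k i j, MemLp (z k i j) 2 P)
    (k : ℕ) :
    ∀ᵐ ω ∂P,
      (P[fun ω' => ∑ i, ‖g k i ω' - gradient (floc f i) (x k i ω')‖ ^ 2 | gtFilt τ s k]) ω
        ≤ 2 * L ^ 2 * consSq (fun i => x k i ω)
          + 2 * n * L ^ 2 * tAux (blockAvg (fun i => x k i ω)) (fun i j => z k i j ω) := by
  have hnoise : ∀ ω i, g k i ω - gradient (floc f i) (x k i ω)
      = sagaError (f i) (x k i ω) (fun l => z k i l ω) (τ i k ω) := fun ω i => by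
    rw [hgdef, show floc f i = fun u => (m : ℝ)⁻¹ * ∑ j, f i j u from rfl]
    exact (sagaError_eq (fun j => (hdiff i j).differentiableAt) (fun l => z k i l ω) (τ i k ω)).symm
  obtain ⟨hxF, hzF⟩ := gtsaga_adapted (fun i j => (hlip i j).continuous) hx0 hz0 hy0 hgdef hydef
    hxdef hzdef k
  simp only [hnoise]
  filter_upwards [condExp_sum_norm_sq_sagaError (gtFilt_le hτmeas hsmeas k) hlip
    (fun i => hτmeas i k) (fun i => indep_comap_gtFilt hτmeas hsmeas hindep i k)
    (fun i => hτunif i k) hxF hzF (fun i => hxL2 k i) (fun i => hzL2 k i)] with ω hω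
  rw [hω]
  simpa [Real.coe_toNNReal _ hL.le] using
    sum_average_norm_sq_sagaError_le (by omega) (by omega) hlip (fun i => x k i ω)
      (fun i j => z k i j ω)

/-- GT-SAGA: bound on the variance of the local SAGA gradient estimators. -/
theorem gtsaga_local_variance_bound
    {Ω : Type} [MeasurableSpace Ω] (P : Measure Ω) [IsProbabilityMeasure P]
    {n m p : ℕ} (hn : 1 ≤ n) (hm : 1 ≤ m)
    (L : ℝ) (hL : 0 < L)
    (f : Fin n → Fin m → EuclideanSpace ℝ (Fin p) → ℝ)
    (hdiff : ∀ i j, Differentiable ℝ (f i j))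
    (hlip : ∀ i j, LipschitzWith L.toNNReal (gradient (f i j)))
    (hFbdd : BddBelow (Set.range (fglob f)))
    (w : Matrix (Fin n) (Fin n) ℝ)
    (hrow : ∀ i, ∑ r, w i r = 1) (hcol : ∀ r, ∑ i, w i r = 1)
    (lam : ℝ) (hlam : lam = secondSV w) (hlam0 : 0 ≤ lam) (hlam1 : lam < 1)
    (τ s : Fin n → ℕ → Ω → Fin m)
    (hτmeas : ∀ i k, Measurable (τ i k)) (hsmeas : ∀ i k, Measurable (s i k))
    (hτunif : ∀ i k j, P {ω | τ i k ω = j} = (m : ℝ≥0∞)⁻¹)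
    (hsunif : ∀ i k j, P {ω | s i k ω = j} = (m : ℝ≥0∞)⁻¹)
    (hindep : iIndepFun (m := fun _ : Fin n × ℕ × Bool => (inferInstance : MeasurableSpace (Fin m)))
      (fun q ω => if q.2.2 then τ q.1 q.2.1 ω else s q.1 q.2.1 ω) P)
    (α : ℝ) (hα0 : 0 < α)
    (x y g : ℕ → Fin n → Ω → EuclideanSpace ℝ (Fin p))
    (z : ℕ → Fin n → Fin m → Ω → EuclideanSpace ℝ (Fin p))
    (x0 : EuclideanSpace ℝ (Fin p))
    (hx0 : ∀ i ω, x 0 i ω = x0)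
    (hz0 : ∀ i j ω, z 0 i j ω = x0)
    (hy0 : ∀ i ω, y 0 i ω = 0)
    (hgdef : ∀ k i ω, g k i ω =
      gradient (f i (τ i k ω)) (x k i ω) - gradient (f i (τ i k ω)) (z k i (τ i k ω) ω)
        + (m : ℝ)⁻¹ • ∑ j, gradient (f i j) (z k i j ω))
    (hydef : ∀ k i ω, y (k + 1) i ω =
      ∑ r, w i r • (y k r ω + g k r ω - (if k = 0 then 0 else g (k - 1) r ω)))
    (hxdef : ∀ k i ω, x (k + 1) i ω = ∑ r, w i r • (x k r ω - α • y (k + 1) r ω))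
    (hzdef : ∀ k i j ω, z (k + 1) i j ω = if j = s i k ω then x k i ω else z k i j ω)
    (hxL2 : ∀ k i, MemLp (x k i) 2 P)
    (hyL2 : ∀ k i, MemLp (y k i) 2 P)
    (hgL2 : ∀ k i, MemLp (g k i) 2 P)
    (hzL2 : ∀ k i j, MemLp (z k i j) 2 P)
    (k : ℕ) :
    ∀ᵐ ω ∂P,
      (P[fun ω' => ∑ i, ‖g k i ω' - gradient (floc f i) (x k i ω')‖ ^ 2 | gtFilt τ s k]) ω
        ≤ 2 * L ^ 2 * consSq (fun i => x k i ω)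
          + 2 * n * L ^ 2 * tAux (blockAvg (fun i => x k i ω)) (fun i j => z k i j ω) :=
  gtsaga_local_variance_bound_general P hn hm L hL f hdiff hlip w τ s hτmeas hsmeas hτunif hindep α
    x y g z x0 hx0 hz0 hy0 hgdef hydef hxdef hzdef hxL2 hzL2 k

end
end

section
/- Under the GT-SAGA setup, for every k ≥ 0 and all η₁ > 0, η₂ > 0, the following deterministic (pathwise) inequality holds: ⟨Wy^{k+1} − Jy^{k+1}, (W − J)(∇f(x^{k+1}) − ∇f(x^k))⟩ ≤ (λαL + η₁/2 + η₂)·λ²·‖y^{k+1} − Jy^{k+1}‖² + (1/(2η₁))·λ²α²L²n·‖ḡ^k‖² + (1/η₂)·λ²L²·‖x^k − Jx^k‖². -/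
/-!
With `a = ‖y^{k+1} - J y^{k+1}‖` and `c = ‖x^k - J x^k‖`: since `W` has unit row sums,
`(W - J) v = (W - J)(v - J v)`, and `W - J` acts blockwise on `ℝ^{np}` with operator norm `λ`
(apply it to each of the `p` coordinate columns). Cauchy–Schwarz and the `L`-Lipschitz local
gradients bound the cross term by `λ a · λ L ‖x^{k+1} - x^k‖`. The increment is
`(W - J) x^k - (x^k - J x^k) - α ((W - J) y^{k+1} + J y^{k+1})`, and gradient tracking
(`W` has unit column sums) gives `ȳ^{k+1} = ḡ^k`, so `‖x^{k+1} - x^k‖ ≤ 2c + α (λ a + √n ‖ḡ^k‖)`.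
Two weighted AM–GM inequalities `2uv ≤ η u² + v²/η` split the products.
-/

open MeasureTheory ProbabilityTheory Finset Filter
open scoped ENNReal RealInnerProductSpace

noncomputable section

section Stacked

variable {n p : ℕ}

lemma norm_toLp_sq (v : Fin n → EuclideanSpace ℝ (Fin p)) :
    ‖WithLp.toLp 2 v‖ ^ 2 = ∑ i, ‖v i‖ ^ 2 :=
  PiLp.norm_sq_eq_of_L2 _ _

lemma norm_toLp_const (u : EuclideanSpace ℝ (Fin p)) :
    ‖WithLp.toLp 2 (fun _ : Fin n => u)‖ = √n * ‖u‖ := by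
  rw [← sq_eq_sq₀ (norm_nonneg _) (by positivity), norm_toLp_sq, mul_pow,
    Real.sq_sqrt n.cast_nonneg]
  simp

lemma norm_toLp_le_mul_of_forall {K : ℝ} (hK : 0 ≤ K) {u v : Fin n → EuclideanSpace ℝ (Fin p)}
    (h : ∀ i, ‖v i‖ ≤ K * ‖u i‖) : ‖WithLp.toLp 2 v‖ ≤ K * ‖WithLp.toLp 2 u‖ := by
  rw [← pow_le_pow_iff_left₀ (norm_nonneg _) (by positivity) two_ne_zero, mul_pow,
    norm_toLp_sq, norm_toLp_sq, Finset.mul_sum]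
  gcongr with i
  rw [← mul_pow]
  exact pow_le_pow_left₀ (norm_nonneg _) (h i) 2

lemma consSq_eq_norm_sq (v : Fin n → EuclideanSpace ℝ (Fin p)) :
    consSq v = ‖WithLp.toLp 2 (fun i => v i - blockAvg v)‖ ^ 2 :=
  (norm_toLp_sq _).symm

lemma sum_eq_card_smul_blockAvg (v : Fin n → EuclideanSpace ℝ (Fin p)) :
    ∑ i, v i = (n : ℝ) • blockAvg v := by
  rcases n.eq_zero_or_pos with rfl | hn
  · simp
  · rw [blockAvg, smul_smul, mul_inv_cancel₀ (by positivity), one_smul]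

lemma consSq_eq_sum_norm_sq_sub (v : Fin n → EuclideanSpace ℝ (Fin p)) :
    consSq v = ∑ i, ‖v i‖ ^ 2 - n * ‖blockAvg v‖ ^ 2 := by
  have hcross : ∑ i, ⟪v i, blockAvg v⟫ = n * ‖blockAvg v‖ ^ 2 := by
    rw [← sum_inner, sum_eq_card_smul_blockAvg, real_inner_smul_left,
      real_inner_self_eq_norm_sq]
  simp only [consSq, norm_sub_sq_real, Finset.sum_add_distrib, Finset.sum_sub_distrib,
    ← Finset.mul_sum, hcross, Finset.sum_const, Finset.card_univ, Fintype.card_fin, nsmul_eq_mul]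
  ring

lemma norm_toLp_sub_blockAvg_le (v : Fin n → EuclideanSpace ℝ (Fin p)) :
    ‖WithLp.toLp 2 (fun i => v i - blockAvg v)‖ ≤ ‖WithLp.toLp 2 v‖ := by
  rw [← pow_le_pow_iff_left₀ (norm_nonneg _) (norm_nonneg _) two_ne_zero,
    ← consSq_eq_norm_sq, consSq_eq_sum_norm_sq_sub, norm_toLp_sq]
  have : 0 ≤ (n : ℝ) * ‖blockAvg v‖ ^ 2 := by positivity
  linarith

end Stacked

section Kronecker

variable {n p : ℕ}

lemma sum_norm_sq_eq_sum_norm_sq_transpose (v : Fin n → EuclideanSpace ℝ (Fin p)) :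
    ∑ i, ‖v i‖ ^ 2 = ∑ q, ‖(WithLp.toLp 2 fun i => v i q : EuclideanSpace ℝ (Fin n))‖ ^ 2 := by
  simp only [EuclideanSpace.norm_sq_eq]
  exact Finset.sum_comm

lemma sum_norm_sq_sum_smul_le (M : Matrix (Fin n) (Fin n) ℝ)
    (v : Fin n → EuclideanSpace ℝ (Fin p)) :
    ∑ i, ‖∑ r, M i r • v r‖ ^ 2
      ≤ ‖LinearMap.toContinuousLinearMap (Matrix.toEuclideanLin M)‖ ^ 2 * ∑ i, ‖v i‖ ^ 2 := by
  set A := LinearMap.toContinuousLinearMap (Matrix.toEuclideanLin M)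
  have hcol : ∀ q, (WithLp.toLp 2 fun i => (∑ r, M i r • v r) q : EuclideanSpace ℝ (Fin n))
      = A (WithLp.toLp 2 fun r => v r q) := by
    intro q
    ext i
    simp [A, Matrix.mulVec, dotProduct]
  rw [sum_norm_sq_eq_sum_norm_sq_transpose v, sum_norm_sq_eq_sum_norm_sq_transpose,
    Finset.mul_sum]
  gcongr with q
  rw [hcol, ← mul_pow]
  exact pow_le_pow_left₀ (norm_nonneg _) (A.le_opNorm _) 2

end Kronecker

section Mixing

variable {n p : ℕ} {w : Matrix (Fin n) (Fin n) ℝ}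

lemma WJapp_eq_sum_smul_sub_blockAvg (hrow : ∀ i, ∑ r, w i r = 1)
    (v : Fin n → EuclideanSpace ℝ (Fin p)) (i : Fin n) :
    WJapp w v i = ∑ r, (w i r - (n : ℝ)⁻¹) • (v r - blockAvg v) := by
  have hn : (n : ℝ) ≠ 0 := Nat.cast_ne_zero.mpr (Fin.pos i).ne'
  have hzero : ∑ r, (w i r - (n : ℝ)⁻¹) = 0 := by
    simp [Finset.sum_sub_distrib, hrow i, hn]
  rw [Finset.sum_congr rfl fun r _ => smul_sub _ _ _, Finset.sum_sub_distrib, ← Finset.sum_smul,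
    hzero, zero_smul, sub_zero]
  simp only [sub_smul, Finset.sum_sub_distrib, ← Finset.smul_sum, WJapp, blockAvg]

lemma norm_toLp_WJapp_le (hrow : ∀ i, ∑ r, w i r = 1) (v : Fin n → EuclideanSpace ℝ (Fin p)) :
    ‖WithLp.toLp 2 (WJapp w v)‖ ≤ secondSV w * ‖WithLp.toLp 2 (fun i => v i - blockAvg v)‖ := by
  have hsq := sum_norm_sq_sum_smul_le (w - Matrix.of fun _ _ => (n : ℝ)⁻¹)
    (fun r => v r - blockAvg v)
  simp only [Matrix.sub_apply, Matrix.of_apply, ← WJapp_eq_sum_smul_sub_blockAvg hrow] at hsq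
  rw [← pow_le_pow_iff_left₀ (norm_nonneg _) (by unfold secondSV; positivity) two_ne_zero,
    mul_pow, norm_toLp_sq, norm_toLp_sq]
  exact hsq

lemma norm_toLp_WJapp_le_norm (hrow : ∀ i, ∑ r, w i r = 1)
    (v : Fin n → EuclideanSpace ℝ (Fin p)) :
    ‖WithLp.toLp 2 (WJapp w v)‖ ≤ secondSV w * ‖WithLp.toLp 2 v‖ :=
  (norm_toLp_WJapp_le hrow v).trans <|
    mul_le_mul_of_nonneg_left (norm_toLp_sub_blockAvg_le v) (norm_nonneg _)

lemma blockAvg_sum_smul (hcol : ∀ r, ∑ i, w i r = 1) (v : Fin n → EuclideanSpace ℝ (Fin p)) :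
    blockAvg (fun i => ∑ r, w i r • v r) = blockAvg v := by
  simp only [blockAvg]
  rw [Finset.sum_comm]
  simp [← Finset.sum_smul, hcol]

end Mixing

section Iteration

variable {n p : ℕ} {w : Matrix (Fin n) (Fin n) ℝ}

lemma blockAvg_tracking (hcol : ∀ r, ∑ i, w i r = 1) {y g : ℕ → Fin n → EuclideanSpace ℝ (Fin p)}
    (hy0 : ∀ i, y 0 i = 0)
    (hy : ∀ k i, y (k + 1) i = ∑ r, w i r • (y k r + g k r - if k = 0 then 0 else g (k - 1) r))
    (k : ℕ) : blockAvg (y (k + 1)) = blockAvg (g k) := by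
  have hlin : ∀ a b c : Fin n → EuclideanSpace ℝ (Fin p),
      blockAvg (fun i => a i + b i - c i) = blockAvg a + blockAvg b - blockAvg c := by
    intro a b c
    simp only [blockAvg, Finset.sum_sub_distrib, Finset.sum_add_distrib, smul_sub, smul_add]
  induction k with
  | zero => simp [funext (hy 0), blockAvg_sum_smul hcol, hy0]
  | succ k ih =>
    rw [funext (hy (k + 1)), blockAvg_sum_smul hcol]
    simp only [Nat.add_one_ne_zero, if_false, Nat.add_sub_cancel, hlin, ih]
    exact add_sub_cancel_left _ _

lemma norm_toLp_mixStep_sub_le (hrow : ∀ i, ∑ r, w i r = 1) (hw : secondSV w ≤ 1) {α : ℝ}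
    (hα : 0 ≤ α) (X Y : Fin n → EuclideanSpace ℝ (Fin p)) :
    ‖WithLp.toLp 2 (fun i => ∑ r, w i r • (X r - α • Y r) - X i)‖
      ≤ 2 * ‖WithLp.toLp 2 (fun i => X i - blockAvg X)‖
        + α * (secondSV w * ‖WithLp.toLp 2 (fun i => Y i - blockAvg Y)‖ + √n * ‖blockAvg Y‖) := by
  have hdecomp : WithLp.toLp 2 (fun i => ∑ r, w i r • (X r - α • Y r) - X i)
      = WithLp.toLp 2 (WJapp w X) - WithLp.toLp 2 (fun i => X i - blockAvg X)
        - α • (WithLp.toLp 2 (WJapp w Y) + WithLp.toLp 2 (fun _ => blockAvg Y)) := by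
    ext1 i
    simp only [PiLp.sub_apply, PiLp.smul_apply, PiLp.add_apply, WJapp, smul_sub,
      Finset.sum_sub_distrib, smul_comm _ α, ← Finset.smul_sum]
    module
  have hX := norm_toLp_WJapp_le hrow X
  have hY := norm_toLp_WJapp_le hrow Y
  have hXc : secondSV w * ‖WithLp.toLp 2 (fun i => X i - blockAvg X)‖
      ≤ ‖WithLp.toLp 2 (fun i => X i - blockAvg X)‖ :=
    mul_le_of_le_one_left (norm_nonneg _) hw
  rw [hdecomp, ← norm_toLp_const]
  calc _ ≤ ‖WithLp.toLp 2 (WJapp w X)‖ + ‖WithLp.toLp 2 (fun i => X i - blockAvg X)‖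
        + α * (‖WithLp.toLp 2 (WJapp w Y)‖ + ‖WithLp.toLp 2 (fun _ : Fin n => blockAvg Y)‖) := by
        refine (norm_sub_le _ _).trans (add_le_add (norm_sub_le _ _) ?_)
        rw [norm_smul, Real.norm_of_nonneg hα]
        exact mul_le_mul_of_nonneg_left (norm_add_le _ _) hα
    _ ≤ _ := by gcongr; linarith

end Iteration

section LocalGradient

variable {n m p : ℕ} {f : Fin n → Fin m → EuclideanSpace ℝ (Fin p) → ℝ} {i : Fin n}

lemma gradient_floc (hdiff : ∀ j, Differentiable ℝ (f i j)) (u : EuclideanSpace ℝ (Fin p)) :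
    gradient (floc f i) u = (m : ℝ)⁻¹ • ∑ j, gradient (f i j) u := by
  refine HasGradientAt.gradient (hasGradientAt_iff_hasFDerivAt.mpr ?_)
  have hsum : HasFDerivAt (fun v => ∑ j, f i j v)
      (∑ j, InnerProductSpace.toDual ℝ _ (gradient (f i j) u)) u :=
    HasFDerivAt.fun_sum fun j _ =>
      hasGradientAt_iff_hasFDerivAt.mp (hdiff j).differentiableAt.hasGradientAt
  show HasFDerivAt (fun v => (m : ℝ)⁻¹ * ∑ j, f i j v) _ u
  simpa [map_sum] using hsum.const_mul (m : ℝ)⁻¹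

lemma lipschitzWith_gradient_floc {K : NNReal} (hdiff : ∀ j, Differentiable ℝ (f i j))
    (hlip : ∀ j, LipschitzWith K (gradient (f i j))) : LipschitzWith K (gradient (floc f i)) := by
  refine LipschitzWith.of_dist_le_mul fun u v => ?_
  rcases m.eq_zero_or_pos with rfl | hm
  · simp only [gradient_floc hdiff, Finset.univ_eq_empty, Finset.sum_empty, smul_zero, dist_self]
    positivity
  rw [dist_eq_norm, gradient_floc hdiff, gradient_floc hdiff, ← smul_sub,
    ← Finset.sum_sub_distrib, norm_smul, Real.norm_of_nonneg (by positivity)]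
  calc (m : ℝ)⁻¹ * ‖∑ j, (gradient (f i j) u - gradient (f i j) v)‖
      ≤ (m : ℝ)⁻¹ * ∑ _j : Fin m, K * dist u v := by
        gcongr
        refine (norm_sum_le _ _).trans (Finset.sum_le_sum fun j _ => ?_)
        rw [← dist_eq_norm]
        exact (hlip j).dist_le_mul u v
    _ = K * dist u v := by
        rw [Finset.sum_const, Finset.card_univ, Fintype.card_fin, nsmul_eq_mul,
          inv_mul_cancel_left₀ (by positivity)]

end LocalGradient

lemma cross_term_young {lam a b c L α η₁ η₂ : ℝ} (hη₁ : 0 < η₁) (hη₂ : 0 < η₂) :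
    lam * a * (lam * (L * (2 * c + α * (lam * a + b))))
      ≤ (lam * α * L + η₁ / 2 + η₂) * lam ^ 2 * a ^ 2
        + 1 / (2 * η₁) * (lam ^ 2 * α ^ 2 * L ^ 2) * b ^ 2
        + 1 / η₂ * (lam ^ 2 * L ^ 2) * c ^ 2 := by
  have h₁ := two_mul_le_add_mul_sq (a := a) (b := α * L * b) hη₁
  have h₂ := two_mul_le_add_mul_sq (a := a) (b := L * c) hη₂
  have hlam := sq_nonneg lam
  rw [one_div, one_div, mul_inv]
  nlinarith [mul_le_mul_of_nonneg_left h₁ hlam, mul_le_mul_of_nonneg_left h₂ hlam]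

theorem gtsaga_cross_term_bound_pathwise_general
    {Ω : Type} {n m p : ℕ}
    (L : ℝ) (hL : 0 < L)
    (f : Fin n → Fin m → EuclideanSpace ℝ (Fin p) → ℝ)
    (hdiff : ∀ i j, Differentiable ℝ (f i j))
    (hlip : ∀ i j, LipschitzWith L.toNNReal (gradient (f i j)))
    (w : Matrix (Fin n) (Fin n) ℝ)
    (hrow : ∀ i, ∑ r, w i r = 1) (hcol : ∀ r, ∑ i, w i r = 1)
    (lam : ℝ) (hlam : lam = secondSV w) (hlam0 : 0 ≤ lam) (hlam1 : lam < 1)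
    (α : ℝ) (hα0 : 0 < α)
    (x y g : ℕ → Fin n → Ω → EuclideanSpace ℝ (Fin p))
    (hy0 : ∀ i ω, y 0 i ω = 0)
    (hydef : ∀ k i ω, y (k + 1) i ω =
      ∑ r, w i r • (y k r ω + g k r ω - (if k = 0 then 0 else g (k - 1) r ω)))
    (hxdef : ∀ k i ω, x (k + 1) i ω = ∑ r, w i r • (x k r ω - α • y (k + 1) r ω))
    (k : ℕ) (η₁ η₂ : ℝ) (hη₁ : 0 < η₁) (hη₂ : 0 < η₂) :
    ∀ ω,
      (∑ i, ⟪WJapp w (fun r => y (k + 1) r ω) i,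
          WJapp w
            (fun r => gradient (floc f r) (x (k + 1) r ω) - gradient (floc f r) (x k r ω))
            i⟫)
        ≤ (lam * α * L + η₁ / 2 + η₂) * lam ^ 2 * consSq (fun i => y (k + 1) i ω)
          + 1 / (2 * η₁) * (lam ^ 2 * α ^ 2 * L ^ 2 * n) * ‖blockAvg (fun i => g k i ω)‖ ^ 2
          + 1 / η₂ * (lam ^ 2 * L ^ 2) * consSq (fun i => x k i ω) := by
  intro ω
  subst hlam
  set X : Fin n → EuclideanSpace ℝ (Fin p) := fun i => x k i ω
  set Y : Fin n → EuclideanSpace ℝ (Fin p) := fun i => y (k + 1) i ω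
  have htrack : blockAvg Y = blockAvg fun i => g k i ω :=
    blockAvg_tracking hcol (y := fun k i => y k i ω) (fun i => hy0 i ω) (fun k i => hydef k i ω) k
  have hgrad : ‖WithLp.toLp 2 fun i =>
      gradient (floc f i) (x (k + 1) i ω) - gradient (floc f i) (X i)‖
      ≤ L * ‖WithLp.toLp 2 fun i => ∑ r, w i r • (X r - α • Y r) - X i‖ := by
    refine norm_toLp_le_mul_of_forall hL.le fun i => ?_
    rw [← hxdef, ← dist_eq_norm, ← dist_eq_norm, ← Real.coe_toNNReal L hL.le]
    exact (lipschitzWith_gradient_floc (hdiff i) (hlip i)).dist_le_mul _ _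
  have hstep := norm_toLp_mixStep_sub_le hrow hlam1.le hα0.le X Y
  rw [consSq_eq_norm_sq, consSq_eq_norm_sq, ← htrack]
  calc _ ≤ ‖WithLp.toLp 2 (WJapp w Y)‖ * ‖WithLp.toLp 2 (WJapp w fun i =>
          gradient (floc f i) (x (k + 1) i ω) - gradient (floc f i) (X i))‖ :=
        real_inner_le_norm (WithLp.toLp 2 (WJapp w Y)) _
    _ ≤ secondSV w * ‖WithLp.toLp 2 fun i => Y i - blockAvg Y‖
        * (secondSV w * (L * (2 * ‖WithLp.toLp 2 fun i => X i - blockAvg X‖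
          + α * (secondSV w * ‖WithLp.toLp 2 fun i => Y i - blockAvg Y‖
            + √n * ‖blockAvg Y‖)))) := by
        gcongr
        · exact norm_toLp_WJapp_le hrow Y
        · exact (norm_toLp_WJapp_le_norm hrow _).trans
            (by gcongr; exact hgrad.trans (mul_le_mul_of_nonneg_left hstep hL.le))
    _ ≤ _ := (cross_term_young hη₁ hη₂).trans_eq (by rw [mul_pow, Real.sq_sqrt n.cast_nonneg]; ring)

/-- GT-SAGA: pathwise bound on the first cross term in the gradient-tracking analysis. -/
theorem gtsaga_cross_term_bound_pathwise
    {Ω : Type} [MeasurableSpace Ω] (P : Measure Ω) [IsProbabilityMeasure P]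
    {n m p : ℕ} (hn : 1 ≤ n) (hm : 1 ≤ m)
    (L : ℝ) (hL : 0 < L)
    (f : Fin n → Fin m → EuclideanSpace ℝ (Fin p) → ℝ)
    (hdiff : ∀ i j, Differentiable ℝ (f i j))
    (hlip : ∀ i j, LipschitzWith L.toNNReal (gradient (f i j)))
    (hFbdd : BddBelow (Set.range (fglob f)))
    (w : Matrix (Fin n) (Fin n) ℝ)
    (hrow : ∀ i, ∑ r, w i r = 1) (hcol : ∀ r, ∑ i, w i r = 1)
    (lam : ℝ) (hlam : lam = secondSV w) (hlam0 : 0 ≤ lam) (hlam1 : lam < 1)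
    (τ s : Fin n → ℕ → Ω → Fin m)
    (hτmeas : ∀ i k, Measurable (τ i k)) (hsmeas : ∀ i k, Measurable (s i k))
    (hτunif : ∀ i k j, P {ω | τ i k ω = j} = (m : ℝ≥0∞)⁻¹)
    (hsunif : ∀ i k j, P {ω | s i k ω = j} = (m : ℝ≥0∞)⁻¹)
    (hindep : iIndepFun
      (fun (q : Fin n × ℕ × Bool) (ω : Ω) => if q.2.2 then τ q.1 q.2.1 ω else s q.1 q.2.1 ω) P)
    (α : ℝ) (hα0 : 0 < α)
    (x y g : ℕ → Fin n → Ω → EuclideanSpace ℝ (Fin p))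
    (z : ℕ → Fin n → Fin m → Ω → EuclideanSpace ℝ (Fin p))
    (x0 : EuclideanSpace ℝ (Fin p))
    (hx0 : ∀ i ω, x 0 i ω = x0)
    (hz0 : ∀ i j ω, z 0 i j ω = x0)
    (hy0 : ∀ i ω, y 0 i ω = 0)
    (hgdef : ∀ k i ω, g k i ω =
      gradient (f i (τ i k ω)) (x k i ω) - gradient (f i (τ i k ω)) (z k i (τ i k ω) ω)
        + (m : ℝ)⁻¹ • ∑ j, gradient (f i j) (z k i j ω))
    (hydef : ∀ k i ω, y (k + 1) i ω =
      ∑ r, w i r • (y k r ω + g k r ω - (if k = 0 then 0 else g (k - 1) r ω)))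
    (hxdef : ∀ k i ω, x (k + 1) i ω = ∑ r, w i r • (x k r ω - α • y (k + 1) r ω))
    (hzdef : ∀ k i j ω, z (k + 1) i j ω = if j = s i k ω then x k i ω else z k i j ω)
    (hxL2 : ∀ k i, MemLp (x k i) 2 P)
    (hyL2 : ∀ k i, MemLp (y k i) 2 P)
    (hgL2 : ∀ k i, MemLp (g k i) 2 P)
    (hzL2 : ∀ k i j, MemLp (z k i j) 2 P)
    (k : ℕ) (η₁ η₂ : ℝ) (hη₁ : 0 < η₁) (hη₂ : 0 < η₂) :
    ∀ ω,
      (∑ i, ⟪WJapp w (fun r => y (k + 1) r ω) i,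
          WJapp w
            (fun r => gradient (floc f r) (x (k + 1) r ω) - gradient (floc f r) (x k r ω))
            i⟫)
        ≤ (lam * α * L + η₁ / 2 + η₂) * lam ^ 2 * consSq (fun i => y (k + 1) i ω)
          + 1 / (2 * η₁) * (lam ^ 2 * α ^ 2 * L ^ 2 * n) * ‖blockAvg (fun i => g k i ω)‖ ^ 2
          + 1 / η₂ * (lam ^ 2 * L ^ 2) * consSq (fun i => x k i ω) :=
  gtsaga_cross_term_bound_pathwise_general L hL f hdiff hlip w hrow hcol lam hlam hlam0 hlam1 α hα0
    x y g hy0 hydef hxdef k η₁ η₂ hη₁ hη₂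
end
end
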